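/- Let G be a strongly connected directed graph, s an arbitrary vertex, D the dominator tree of G rooted at s and D^R the dominator tree of the reverse graph G^R rooted at s. Let x ≠ s be a vertex whose removal disconnects G in the strong sense. Then every strongly connected component C of G−x satisfies: C ⊆ D[x]∖{x}, or C ⊆ D^R[x]∖{x}, or C = V ∖ (D[x] ∪ D^R[x]); in particular, the SCC of s in G−x is exactly V ∖ (D[x] ∪ D^R[x]) when x is a non-leaf in both D and D^R. -/

import Mathlib

/-!
Since `s ≠ x`, a walk from `s` to `w` avoids `x` exactly when `w` is reachable from `s` in
`G − x`, so `w ∉ D[x]` iff `s ⇝ w` in `G − x`, and dually `w ∉ D^R[x]` iff `w ⇝ s` in `G − x`.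
Hence the strong component of `s` in `G − x` is `V ∖ (D[x] ∪ D^R[x])`. Any other strong
component `C` is either unreachable from `s`, and then `C ⊆ D[x]`, or cannot reach `s`, and
then `C ⊆ D^R[x]`.
-/

/-- A (directed) walk in digraph `G` from `a` to `b`, given as its list of vertices. -/
def DiWalk {V : Type*} (G : V → V → Prop) (a b : V) (l : List V) : Prop :=
  List.Chain' G l ∧ l.head? = some a ∧ l.getLast? = some b

/-- The graph `G` with the vertex `x` removed (induced subgraph `G − x`). -/
def Del {V : Type*} (G : V → V → Prop) (x : V) : V → V → Prop :=
  fun a b => G a b ∧ a ≠ x ∧ b ≠ x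

/-- `a` dominates `b` with respect to source `s`: every `s → b` walk contains `a`.
Thus `{w | Dom G s x w}` is the set `D[x]` of descendants of `x` in the dominator tree. -/
def Dom {V : Type*} (G : V → V → Prop) (s a b : V) : Prop :=
  ∀ l, DiWalk G s b l → a ∈ l

/-- `a` dominates `b` in the reverse graph with respect to `s`: every `b → s` walk
contains `a`. Thus `{w | DomR G s x w}` is `D^R[x]`. -/
def DomR {V : Type*} (G : V → V → Prop) (s a b : V) : Prop :=
  ∀ l, DiWalk G b s l → a ∈ l

open Relation

section StrongComponent

variable {V : Type*} (r : V → V → Prop)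

def strongComponent (v : V) : Set V :=
  {w | ReflTransGen r v w ∧ ReflTransGen r w v}

variable {r}

theorem strongComponent_eq_of_reach {u v : V} (huv : ReflTransGen r u v)
    (hvu : ReflTransGen r v u) : strongComponent r v = strongComponent r u := by
  ext w
  exact ⟨fun ⟨hvw, hwv⟩ => ⟨huv.trans hvw, hwv.trans hvu⟩,
    fun ⟨huw, hwu⟩ => ⟨hvu.trans huw, hwu.trans huv⟩⟩

end StrongComponent

section Walks

variable {V : Type*} {G : V → V → Prop}

theorem DiWalk.singleton (G : V → V → Prop) (a : V) : DiWalk G a a [a] :=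
  ⟨List.isChain_singleton a, rfl, rfl⟩

theorem DiWalk.cons {a b c : V} {l : List V} (h : G a b) (hw : DiWalk G b c l) :
    DiWalk G a c (a :: l) := by
  obtain ⟨hc, hh, hl⟩ := hw
  obtain ⟨d, t, rfl⟩ := List.exists_cons_of_ne_nil (l := l) (by rintro rfl; simp at hh)
  obtain rfl : d = b := by simpa using hh
  exact ⟨List.isChain_cons_cons.2 ⟨h, hc⟩, rfl, by rwa [List.getLast?_cons_cons]⟩

variable {x : V}

theorem ne_of_reflTransGen_del_of_ne_left {a b : V} (h : ReflTransGen (Del G x) a b)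
    (ha : a ≠ x) : b ≠ x := by
  induction h with
  | refl => exact ha
  | tail _ hstep _ => exact hstep.2.2

theorem ne_of_reflTransGen_del_of_ne_right {a b : V} (h : ReflTransGen (Del G x) a b)
    (hb : b ≠ x) : a ≠ x := by
  induction h using ReflTransGen.head_induction_on with
  | refl => exact hb
  | head hstep _ _ => exact hstep.2.1

theorem exists_diWalk_of_reflTransGen_del {a b : V} (h : ReflTransGen (Del G x) a b)
    (ha : a ≠ x) : ∃ l, DiWalk G a b l ∧ x ∉ l := by
  induction h using ReflTransGen.head_induction_on with
  | refl => exact ⟨[b], DiWalk.singleton G b, by simpa using ha.symm⟩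
  | head hstep _ ih =>
    obtain ⟨l, hw, hx⟩ := ih hstep.2.2
    exact ⟨_ :: l, hw.cons hstep.1, by simp [hstep.2.1.symm, hx]⟩

theorem reflTransGen_del_of_diWalk {l : List V} :
    ∀ {a b : V}, DiWalk G a b l → x ∉ l → ReflTransGen (Del G x) a b := by
  induction l with
  | nil => rintro a b ⟨-, hh, -⟩; simp at hh
  | cons c t ih =>
    rintro a b ⟨hc, hh, hl⟩ hx
    obtain rfl : c = a := by simpa using hh
    cases t with
    | nil =>
      obtain rfl : c = b := by simpa using hl
      exact ReflTransGen.refl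
    | cons d t =>
      simp only [List.mem_cons, not_or] at hx
      obtain ⟨hcd, hc⟩ := List.isChain_cons_cons.1 hc
      refine ReflTransGen.head ⟨hcd, Ne.symm hx.1, Ne.symm hx.2.1⟩ (ih ⟨hc, rfl, ?_⟩ ?_)
      · rwa [List.getLast?_cons_cons] at hl
      · simpa using hx.2

theorem reflTransGen_del_iff_exists_diWalk {a b : V} (ha : a ≠ x) :
    ReflTransGen (Del G x) a b ↔ ∃ l, DiWalk G a b l ∧ x ∉ l :=
  ⟨fun h => exists_diWalk_of_reflTransGen_del h ha,
    fun ⟨_, hw, hx⟩ => reflTransGen_del_of_diWalk hw hx⟩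

end Walks

section Dominators

variable {V : Type*} {G : V → V → Prop} {s x : V}

theorem not_dom_iff_reflTransGen_del (hs : s ≠ x) {w : V} :
    ¬ Dom G s x w ↔ ReflTransGen (Del G x) s w := by
  simp only [Dom, not_forall, exists_prop, reflTransGen_del_iff_exists_diWalk hs]

theorem not_domR_iff_reflTransGen_del (hs : s ≠ x) {w : V} :
    ¬ DomR G s x w ↔ ReflTransGen (Del G x) w s := by
  simp only [DomR, not_forall, exists_prop]
  exact ⟨fun ⟨_, hw, hx⟩ => reflTransGen_del_of_diWalk hw hx,
    fun h => exists_diWalk_of_reflTransGen_del h (ne_of_reflTransGen_del_of_ne_right h hs)⟩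

theorem strongComponent_del_source (hs : s ≠ x) :
    strongComponent (Del G x) s = Set.univ \ ({w | Dom G s x w} ∪ {w | DomR G s x w}) := by
  ext w
  simp only [strongComponent, Set.mem_ofPred_eq, Set.mem_sdiff, Set.mem_univ, Set.mem_union,
    true_and, not_or, not_dom_iff_reflTransGen_del hs, not_domR_iff_reflTransGen_del hs]

theorem strongComponent_del_subset_dom (hs : s ≠ x) {v : V} (hv : v ≠ x)
    (hsv : ¬ ReflTransGen (Del G x) s v) :
    strongComponent (Del G x) v ⊆ {w | Dom G s x w} \ {x} := by
  rintro w ⟨hvw, hwv⟩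
  refine ⟨not_not.1 fun hw => hsv ?_, ne_of_reflTransGen_del_of_ne_left hvw hv⟩
  exact ((not_dom_iff_reflTransGen_del hs).1 hw).trans hwv

theorem strongComponent_del_subset_domR (hs : s ≠ x) {v : V} (hv : v ≠ x)
    (hvs : ¬ ReflTransGen (Del G x) v s) :
    strongComponent (Del G x) v ⊆ {w | DomR G s x w} \ {x} := by
  rintro w ⟨hvw, hwv⟩
  refine ⟨not_not.1 fun hw => hvs ?_, ne_of_reflTransGen_del_of_ne_left hvw hv⟩
  exact hvw.trans ((not_domR_iff_reflTransGen_del hs).1 hw)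

end Dominators

theorem stmt_13_general {V : Type*} (G : V → V → Prop) (s x : V)
    (hxs : x ≠ s)
    (C : Set V)
    (hC : ∃ v, v ≠ x ∧ C = {w | Relation.ReflTransGen (Del G x) v w ∧
      Relation.ReflTransGen (Del G x) w v}) :
    (C ⊆ {w | Dom G s x w} \ {x} ∨ C ⊆ {w | DomR G s x w} \ {x} ∨
      C = Set.univ \ ({w | Dom G s x w} ∪ {w | DomR G s x w})) ∧
    ((∃ a, a ≠ x ∧ Dom G s x a) → (∃ b, b ≠ x ∧ DomR G s x b) →
      {w | Relation.ReflTransGen (Del G x) s w ∧ Relation.ReflTransGen (Del G x) w s}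
        = Set.univ \ ({w | Dom G s x w} ∪ {w | DomR G s x w})) := by
  have hsource := strongComponent_del_source (G := G) hxs.symm
  refine ⟨?_, fun _ _ => hsource⟩
  obtain ⟨v, hv, rfl⟩ := hC
  by_cases hsv : ReflTransGen (Del G x) s v
  · by_cases hvs : ReflTransGen (Del G x) v s
    · exact .inr <| .inr <| (strongComponent_eq_of_reach hsv hvs).trans hsource
    · exact .inr <| .inl <| strongComponent_del_subset_domR hxs.symm hv hvs
  · exact .inl <| strongComponent_del_subset_dom hxs.symm hv hsv

/-- for a strongly connected `G`, `x ≠ s` whose removal destroys strong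
connectivity, every SCC `C` of `G − x` satisfies `C ⊆ D[x]∖{x}`, or `C ⊆ D^R[x]∖{x}`,
or `C = V ∖ (D[x] ∪ D^R[x])`; and if `x` is a non-leaf in both dominator trees, the
SCC of `s` in `G − x` equals `V ∖ (D[x] ∪ D^R[x])`. -/
theorem stmt_13 {V : Type*} (G : V → V → Prop) (s x : V)
    (hsc : ∀ a b : V, Relation.ReflTransGen G a b)
    (hxs : x ≠ s)
    (hdisc : ∃ a b : V, a ≠ x ∧ b ≠ x ∧ ¬ Relation.ReflTransGen (Del G x) a b)
    (C : Set V)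
    (hC : ∃ v, v ≠ x ∧ C = {w | Relation.ReflTransGen (Del G x) v w ∧
      Relation.ReflTransGen (Del G x) w v}) :
    (C ⊆ {w | Dom G s x w} \ {x} ∨ C ⊆ {w | DomR G s x w} \ {x} ∨
      C = Set.univ \ ({w | Dom G s x w} ∪ {w | DomR G s x w})) ∧
    ((∃ a, a ≠ x ∧ Dom G s x a) → (∃ b, b ≠ x ∧ DomR G s x b) →
      {w | Relation.ReflTransGen (Del G x) s w ∧ Relation.ReflTransGen (Del G x) w s}
        = Set.univ \ ({w | Dom G s x w} ∪ {w | DomR G s x w})) :=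
  stmt_13_general G s x hxs C hC
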